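/- Let n ≥ 2, p, q ∈ (0,1), let the prior on Θ_n be uniform, and fix θ ∈ Θ_n. Then the expected posterior mass of the true assignment satisfies P_θ Π({θ} | X^n) ≥ 1 − (n/2)·ρ(p,q)^{n/2}·exp(n·ρ(p,q)^{n/2}). -/

import Mathlib

open Finset Real Filter

/-- The set of potential edges of an `n`-vertex graph: pairs `(i,j)` with `i < j`. -/
abbrev Edge (n : ℕ) := {e : Fin n × Fin n // e.1 < e.2}

/-- An observed graph: an edge indicator for each potential edge. -/
abbrev ObsGraph (n : ℕ) := Edge n → Bool

/-- Edge probability under assignment `θ`: `p` within communities, `q` between. -/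
noncomputable def edgeProb {n : ℕ} (p q : ℝ) (θ : Fin n → Bool) (e : Edge n) : ℝ :=
  if θ e.val.1 = θ e.val.2 then p else q

/-- Probability mass function of the observed graph under `θ`. -/
noncomputable def graphPMF {n : ℕ} (p q : ℝ) (θ : Fin n → Bool) (x : ObsGraph n) : ℝ :=
  ∏ e : Edge n, if x e then edgeProb p q θ e else 1 - edgeProb p q θ e

/-- Hellinger affinity of Bernoulli parameters. -/
noncomputable def rho (p q : ℝ) : ℝ := Real.sqrt (p * q) + Real.sqrt ((1 - p) * (1 - q))

/-- Edges whose probability changes from `p` to `q` when replacing `θ` by `η`. -/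
def D1 {n : ℕ} (θ η : Fin n → Bool) : Finset (Fin n × Fin n) :=
  Finset.univ.filter fun e => e.1 < e.2 ∧ θ e.1 = θ e.2 ∧ η e.1 ≠ η e.2

/-- Edges whose probability changes from `q` to `p` when replacing `θ` by `η`. -/
def D2 {n : ℕ} (θ η : Fin n → Bool) : Finset (Fin n × Fin n) :=
  Finset.univ.filter fun e => e.1 < e.2 ∧ θ e.1 ≠ θ e.2 ∧ η e.1 = η e.2

/-- Hamming distance. -/
def hdist {n : ℕ} (θ η : Fin n → Bool) : ℕ := (Finset.univ.filter fun i => θ i ≠ η i).card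

/-- The metric `k(θ,η) = h(θ,η) ∧ (n - h(θ,η))`. -/
def kdist {n : ℕ} (θ η : Fin n → Bool) : ℕ := min (hdist θ η) (n - hdist θ η)

/-- Size of the smallest community. -/
def countOnes {n : ℕ} (θ : Fin n → Bool) : ℕ := (Finset.univ.filter fun i => θ i = true).card

/-- The parameter space `Θ_n`. -/
def Theta (n : ℕ) : Finset (Fin n → Bool) :=
  Finset.univ.filter fun θ => 2 * countOnes θ ≤ n ∧
    ∀ i : Fin n, 2 * countOnes θ = n → (i : ℕ) = 0 → θ i = false

/-- Posterior mass of `A ⊆ Θ_n` given data `x`, under prior mass function `π`. -/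
noncomputable def postMass {n : ℕ} (p q : ℝ) (pri : (Fin n → Bool) → ℝ)
    (A : Finset (Fin n → Bool)) (x : ObsGraph n) : ℝ :=
  (∑ η ∈ A, pri η * graphPMF p q η x) / (∑ η ∈ Theta n, pri η * graphPMF p q η x)

/-- `P_θ`-expectation of the posterior mass of `A`. -/
noncomputable def expPostMass {n : ℕ} (p q : ℝ) (pri : (Fin n → Bool) → ℝ)
    (θ : Fin n → Bool) (A : Finset (Fin n → Bool)) : ℝ :=
  ∑ x : ObsGraph n, graphPMF p q θ x * postMass p q pri A x

/-- The uniform prior on `Θ_n`. -/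
noncomputable def unifPrior (n : ℕ) : (Fin n → Bool) → ℝ := fun _ => ((2:ℝ) ^ (n - 1))⁻¹

/-- Hamming ball `B_n(θ,k)` inside `Θ_n`. -/
def hball {n : ℕ} (θ : Fin n → Bool) (k : ℕ) : Finset (Fin n → Bool) :=
  (Theta n).filter fun η => kdist η θ ≤ k

/-!
Against each competitor `η`, the posterior weight of the truth `θ` loses at most
`p_θ p_η / (p_θ + p_η) ≤ √(p_θ p_η) / 2`, so `P_θ Π({θ} | X)` is at least `1 - ½ Σ_{η ≠ θ} A(θ, η)`,
with `A` the Hellinger affinity of the two graph laws. The affinity factors over the edges into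
`ρ(p,q) ^ m`, where `m` counts the pairs whose "same community" status differs under `θ` and `η`.
If `η` relabels the set `S` of vertices, then `m ≥ |S| (n - |S|) ≥ (n/2) k(θ,η)`. Sending `η` to
the smaller of `S` and its complement is injective on `Θ_n` with nonempty values, whence
`Σ_{η ≠ θ} ρ^{(n/2) k(θ,η)} ≤ (1 + ρ^{n/2})^n - 1 ≤ n ρ^{n/2} exp(n ρ^{n/2})`.
-/

section Posterior

variable {ι Ω : Type*} [Fintype Ω] [DecidableEq ι]

lemma sqrt_mul_le_add_div_two {a b : ℝ} (ha : 0 ≤ a) (hb : 0 ≤ b) : √(a * b) ≤ (a + b) / 2 :=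
  Real.sqrt_le_iff.mpr ⟨by positivity, by nlinarith [sq_nonneg (a - b)]⟩

lemma mul_div_add_le_sqrt_mul_div_two {a b : ℝ} (ha : 0 < a) (hb : 0 < b) :
    a * b / (a + b) ≤ √(a * b) / 2 := by
  rw [div_le_div_iff₀ (by positivity) two_pos]
  calc a * b * 2 = √(a * b) * √(a * b) * 2 := by rw [Real.mul_self_sqrt (by positivity)]
    _ ≤ √(a * b) * ((a + b) / 2) * 2 := by gcongr; exact sqrt_mul_le_add_div_two ha.le hb.le
    _ = √(a * b) * (a + b) := by ring

lemma sub_sum_sqrt_le_mul_div_sum {T : Finset ι} {θ : ι} (hθ : θ ∈ T) {w : ι → ℝ}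
    (hw : ∀ η ∈ T, 0 < w η) :
    w θ - ∑ η ∈ T.erase θ, √(w θ * w η) / 2 ≤ w θ * (w θ / ∑ η ∈ T, w η) := by
  have hsplit : w θ + ∑ η ∈ T.erase θ, w η = ∑ η ∈ T, w η := add_sum_erase T w hθ
  have hS : 0 < ∑ η ∈ T, w η := sum_pos hw ⟨θ, hθ⟩
  have hcompetitor : ∀ η ∈ T.erase θ, w θ * w η / ∑ η ∈ T, w η ≤ √(w θ * w η) / 2 := by
    intro η hη
    have hηT := mem_of_mem_erase hη
    have hle : w η ≤ ∑ η ∈ T.erase θ, w η :=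
      single_le_sum (fun ζ hζ => (hw ζ (mem_of_mem_erase hζ)).le) hη
    calc w θ * w η / ∑ η ∈ T, w η ≤ w θ * w η / (w θ + w η) := by
          gcongr
          · exact mul_pos (hw θ hθ) (hw η hηT) |>.le
          · exact add_pos (hw θ hθ) (hw η hηT)
          · linarith
      _ ≤ √(w θ * w η) / 2 := mul_div_add_le_sqrt_mul_div_two (hw θ hθ) (hw η hηT)
  have hloss : w θ * (w θ / ∑ η ∈ T, w η)
      = w θ - ∑ η ∈ T.erase θ, w θ * w η / ∑ η ∈ T, w η := by
    rw [← sum_div, ← mul_sum]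
    field_simp
    linear_combination w θ * hsplit
  linarith [sum_le_sum hcompetitor]

/-- The right-hand side is the expected posterior mass of `θ` under the uniform prior on `T`. -/
lemma one_sub_sum_affinity_le_sum_mul_posterior {T : Finset ι} {θ : ι} (hθ : θ ∈ T)
    {P : ι → Ω → ℝ} (hP : ∀ η ∈ T, ∀ x, 0 < P η x) (hθ1 : ∑ x, P θ x = 1) :
    1 - ∑ η ∈ T.erase θ, (∑ x, √(P θ x * P η x)) / 2
      ≤ ∑ x, P θ x * (P θ x / ∑ η ∈ T, P η x) := by
  calc 1 - ∑ η ∈ T.erase θ, (∑ x, √(P θ x * P η x)) / 2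
      = ∑ x, (P θ x - ∑ η ∈ T.erase θ, √(P θ x * P η x) / 2) := by
        simp only [sum_div]
        rw [sum_sub_distrib, hθ1, sum_comm]
    _ ≤ _ := sum_le_sum fun x _ => sub_sum_sqrt_le_mul_div_sum hθ fun η hη => hP η hη x

end Posterior

section Affinity

lemma rho_comm (p q : ℝ) : rho p q = rho q p := by
  simp only [rho, mul_comm]

lemma rho_self {p : ℝ} (hp : p ∈ Set.Icc (0:ℝ) 1) : rho p p = 1 := by
  rw [rho, Real.sqrt_mul_self hp.1, Real.sqrt_mul_self (sub_nonneg.mpr hp.2)]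
  ring

lemma rho_pos {p q : ℝ} (hp : 0 < p) (hq : 0 < q) : 0 < rho p q :=
  add_pos_of_pos_of_nonneg (Real.sqrt_pos.mpr (mul_pos hp hq)) (Real.sqrt_nonneg _)

lemma rho_le_one {p q : ℝ} (hp : p ∈ Set.Icc (0:ℝ) 1) (hq : q ∈ Set.Icc (0:ℝ) 1) :
    rho p q ≤ 1 := by
  have h₁ := sqrt_mul_le_add_div_two hp.1 hq.1
  have h₂ := sqrt_mul_le_add_div_two (sub_nonneg.mpr hp.2) (sub_nonneg.mpr hq.2)
  rw [rho]
  linarith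

variable {ι : Type*} [Fintype ι]

noncomputable def productBernoulli (a : ι → ℝ) (x : ι → Bool) : ℝ :=
  ∏ i, if x i then a i else 1 - a i

lemma productBernoulli_pos {a : ι → ℝ} (ha : ∀ i, a i ∈ Set.Ioo (0:ℝ) 1) (x : ι → Bool) :
    0 < productBernoulli a x :=
  prod_pos fun i _ => by
    obtain ⟨h₀, h₁⟩ := ha i
    split <;> linarith

variable [DecidableEq ι]

lemma sum_productBernoulli (a : ι → ℝ) : ∑ x, productBernoulli a x = 1 := by
  simp only [productBernoulli]
  rw [← Fintype.prod_sum fun i (b : Bool) => if b then a i else 1 - a i]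
  simp

lemma sum_sqrt_productBernoulli {a b : ι → ℝ} (ha : ∀ i, a i ∈ Set.Icc (0:ℝ) 1)
    (hb : ∀ i, b i ∈ Set.Icc (0:ℝ) 1) :
    ∑ x, √(productBernoulli a x * productBernoulli b x) = ∏ i, rho (a i) (b i) := by
  have hfactor : ∀ x : ι → Bool, √(productBernoulli a x * productBernoulli b x)
      = ∏ i, √((if x i then a i else 1 - a i) * (if x i then b i else 1 - b i)) := by
    intro x
    rw [productBernoulli, productBernoulli, ← prod_mul_distrib, Real.sqrt_prod]
    intro i _
    obtain ⟨ha₀, ha₁⟩ := ha i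
    obtain ⟨hb₀, hb₁⟩ := hb i
    split <;> nlinarith
  rw [funext hfactor, ← Fintype.prod_sum fun i (c : Bool) =>
    √((if c then a i else 1 - a i) * (if c then b i else 1 - b i))]
  simp [rho]

end Affinity

section Graph

variable {n : ℕ}

def changedPairs (θ η : Fin n → Bool) : Finset (Edge n) :=
  univ.filter fun e => ¬(θ e.1.1 = θ e.1.2 ↔ η e.1.1 = η e.1.2)

def diffSet (θ η : Fin n → Bool) : Finset (Fin n) := univ.filter fun i => θ i ≠ η i

lemma edgeProb_mem {p q : ℝ} {s : Set ℝ} (hp : p ∈ s) (hq : q ∈ s) (θ : Fin n → Bool)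
    (e : Edge n) : edgeProb p q θ e ∈ s := by
  unfold edgeProb
  split <;> assumption

lemma rho_edgeProb {p q : ℝ} (hp : p ∈ Set.Icc (0:ℝ) 1) (hq : q ∈ Set.Icc (0:ℝ) 1)
    (θ η : Fin n → Bool) (e : Edge n) :
    rho (edgeProb p q θ e) (edgeProb p q η e) = if e ∈ changedPairs θ η then rho p q else 1 := by
  simp only [edgeProb, changedPairs, mem_filter, mem_univ, true_and]
  split_ifs <;> simp_all [rho_self, rho_comm]

lemma sum_sqrt_graphPMF {p q : ℝ} (hp : p ∈ Set.Icc (0:ℝ) 1) (hq : q ∈ Set.Icc (0:ℝ) 1)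
    (θ η : Fin n → Bool) :
    ∑ x, √(graphPMF p q θ x * graphPMF p q η x) = rho p q ^ #(changedPairs θ η) := by
  change ∑ x, √(productBernoulli (edgeProb p q θ) x * productBernoulli (edgeProb p q η) x) = _
  rw [sum_sqrt_productBernoulli (edgeProb_mem hp hq θ) (edgeProb_mem hp hq η)]
  simp only [rho_edgeProb hp hq, Fintype.prod_ite_mem, prod_const]

lemma card_mul_card_compl_le_card_changedPairs (θ η : Fin n → Bool) :
    #(diffSet η θ) * #(diffSet η θ)ᶜ ≤ #(changedPairs θ η) := by
  set S := diffSet η θ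
  have hmem : ∀ i, i ∈ S ↔ η i ≠ θ i := by simp [S, diffSet]
  have hchanged : ∀ i ∈ S, ∀ j ∉ S, ¬(θ i = θ j ↔ η i = η j) ∧ ¬(θ j = θ i ↔ η j = η i) := by
    intro i hi j hj
    rw [hmem] at hi hj
    cases hθi : θ i <;> cases hθj : θ j <;> cases hηi : η i <;> cases hηj : η j <;> simp_all
  calc #S * #Sᶜ = #(S ×ˢ Sᶜ) := (card_product _ _).symm
    _ ≤ #((changedPairs θ η).map (Function.Embedding.subtype _)) := by
      refine card_le_card_of_injOn (fun ij => (min ij.1 ij.2, max ij.1 ij.2)) ?_ ?_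
      · rintro ⟨i, j⟩ hij
        simp only [coe_product, Set.mem_prod, mem_coe, coe_compl, Set.mem_compl_iff] at hij
        have hne : i ≠ j := fun h => hij.2 (h ▸ hij.1)
        simp only [coe_map, Set.mem_image, mem_coe, changedPairs, mem_filter, mem_univ, true_and,
          Function.Embedding.subtype_apply, Subtype.exists, exists_and_right, exists_eq_right]
        refine ⟨min_lt_max.mpr hne, ?_⟩
        rcases le_total i j with h | h
        · simpa [min_eq_left h, max_eq_right h] using (hchanged i hij.1 j hij.2).1
        · simpa [min_eq_right h, max_eq_left h] using (hchanged i hij.1 j hij.2).2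
      · rintro ⟨i, j⟩ hij ⟨i', j'⟩ hij' heq
        simp only [coe_product, Set.mem_prod, mem_coe, coe_compl, Set.mem_compl_iff] at hij hij'
        simp only [Prod.mk.injEq] at heq ⊢
        rcases le_total i j with h | h <;> rcases le_total i' j' with h' | h' <;>
          simp only [min_eq_left, min_eq_right, max_eq_left, max_eq_right, h, h'] at heq <;>
          obtain ⟨rfl, rfl⟩ := heq <;> simp_all
    _ = #(changedPairs θ η) := card_map _

lemma add_mul_min_le_two_mul (a b : ℕ) : (a + b) * min a b ≤ 2 * (a * b) := by
  rcases le_total a b with h | h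
  · rw [min_eq_left h]; nlinarith
  · rw [min_eq_right h]; nlinarith

lemma mul_kdist_le_two_mul_card_changedPairs (θ η : Fin n → Bool) :
    n * kdist η θ ≤ 2 * #(changedPairs θ η) := by
  have hle : hdist η θ ≤ n := (card_le_univ (diffSet η θ)).trans_eq (Fintype.card_fin n)
  have hcompl : #(diffSet η θ)ᶜ = n - hdist η θ := by rw [card_compl, Fintype.card_fin]; rfl
  calc n * kdist η θ = (hdist η θ + (n - hdist η θ)) * min (hdist η θ) (n - hdist η θ) := by
        rw [Nat.add_sub_cancel' hle, kdist]
    _ ≤ 2 * (hdist η θ * (n - hdist η θ)) := add_mul_min_le_two_mul _ _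
    _ ≤ 2 * #(changedPairs θ η) := by
      rw [← hcompl]
      exact Nat.mul_le_mul_left 2 (card_mul_card_compl_le_card_changedPairs θ η)

lemma sum_sqrt_graphPMF_le {p q : ℝ} (hp : p ∈ Set.Ioo (0:ℝ) 1) (hq : q ∈ Set.Ioo (0:ℝ) 1)
    (θ η : Fin n → Bool) :
    ∑ x, √(graphPMF p q θ x * graphPMF p q η x) ≤ (rho p q ^ ((n : ℝ) / 2)) ^ kdist η θ := by
  have hp' := Set.Ioo_subset_Icc_self hp
  have hq' := Set.Ioo_subset_Icc_self hq
  have hρ := rho_pos hp.1 hq.1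
  rw [sum_sqrt_graphPMF hp' hq', ← rpow_natCast, ← rpow_natCast, ← rpow_mul hρ.le]
  refine rpow_le_rpow_of_exponent_ge hρ (rho_le_one hp' hq') ?_
  have := mul_kdist_le_two_mul_card_changedPairs θ η
  rw [div_mul_eq_mul_div, div_le_iff₀ two_pos]
  exact_mod_cast (by linarith)

end Graph

section Relabeling

variable {n : ℕ}

lemma eq_of_diffSet_eq {θ η₁ η₂ : Fin n → Bool} (h : diffSet η₁ θ = diffSet η₂ θ) : η₁ = η₂ := by
  funext i
  have hi := Finset.ext_iff.mp h i
  simp only [diffSet, mem_filter, mem_univ, true_and] at hi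
  revert hi
  cases θ i <;> cases η₁ i <;> cases η₂ i <;> simp

lemma eq_not_of_diffSet_eq_compl {θ η₁ η₂ : Fin n → Bool} (h : diffSet η₁ θ = (diffSet η₂ θ)ᶜ) :
    η₂ = fun i => !η₁ i := by
  funext i
  have hi := Finset.ext_iff.mp h i
  simp only [diffSet, mem_compl, mem_filter, mem_univ, true_and] at hi
  revert hi
  cases θ i <;> cases η₁ i <;> cases η₂ i <;> simp

lemma countOnes_not_add_countOnes (η : Fin n → Bool) :
    countOnes (fun i => !η i) + countOnes η = n := by
  have h := card_filter_add_card_filter_not (s := (univ : Finset (Fin n))) (fun i => η i = true)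
  simp only [card_univ, Fintype.card_fin, Bool.not_eq_true] at h
  simpa only [countOnes, Bool.not_eq_true', add_comm] using h

/-- `Θ_n` contains at most one labelling of each partition. -/
lemma complement_notMem_Theta (hn : 0 < n) {η : Fin n → Bool} (hη : η ∈ Theta n) :
    (fun i => !η i) ∉ Theta n := by
  intro hη'
  simp only [Theta, mem_filter, mem_univ, true_and] at hη hη'
  have hsum := countOnes_not_add_countOnes η
  have hη₀ := hη.2 ⟨0, hn⟩ (by omega) rfl
  have hη₀' := hη'.2 ⟨0, hn⟩ (by omega) rfl
  simp [hη₀] at hη₀'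

def relabelSet (θ η : Fin n → Bool) : Finset (Fin n) :=
  if 2 * hdist η θ ≤ n then diffSet η θ else (diffSet η θ)ᶜ

lemma card_relabelSet (θ η : Fin n → Bool) : #(relabelSet θ η) = kdist η θ := by
  unfold relabelSet kdist
  split_ifs with h
  · rw [min_eq_left (by omega)]; rfl
  · rw [card_compl, Fintype.card_fin, min_eq_right (by omega)]; rfl

lemma relabelSet_self (θ : Fin n → Bool) : relabelSet θ θ = ∅ := by
  simp [relabelSet, hdist, diffSet]

lemma relabelSet_injOn (hn : 0 < n) (θ : Fin n → Bool) : Set.InjOn (relabelSet θ) (Theta n) := by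
  intro η₁ h₁ η₂ h₂ heq
  unfold relabelSet at heq
  split_ifs at heq
  · exact eq_of_diffSet_eq heq
  · exact absurd (eq_not_of_diffSet_eq_compl heq ▸ h₂) (complement_notMem_Theta hn h₁)
  · exact absurd (eq_not_of_diffSet_eq_compl heq.symm ▸ h₁) (complement_notMem_Theta hn h₂)
  · exact eq_of_diffSet_eq (compl_inj_iff.mp heq)

lemma sum_pow_card_finset {α R : Type*} [Fintype α] [CommSemiring R] (x : R) :
    ∑ S : Finset α, x ^ #S = (1 + x) ^ Fintype.card α := by
  simpa [add_comm] using sum_pow_mul_eq_add_pow x 1 (univ : Finset α)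

lemma sum_pow_kdist_le (hn : 0 < n) {θ : Fin n → Bool} (hθ : θ ∈ Theta n) {X : ℝ} (hX : 0 ≤ X) :
    ∑ η ∈ (Theta n).erase θ, X ^ kdist η θ ≤ (1 + X) ^ n - 1 := by
  have hinj := (relabelSet_injOn hn θ).mono (coe_subset.mpr (erase_subset θ (Theta n)))
  have hnonempty : ((Theta n).erase θ).image (relabelSet θ) ⊆ univ.erase ∅ := by
    intro S hS
    obtain ⟨η, hη, rfl⟩ := mem_image.mp hS
    obtain ⟨hne, hηΘ⟩ := mem_erase.mp hη
    refine mem_erase.mpr ⟨fun h => hne ?_, mem_univ _⟩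
    exact relabelSet_injOn hn θ hηΘ hθ (h.trans (relabelSet_self θ).symm)
  calc ∑ η ∈ (Theta n).erase θ, X ^ kdist η θ
      = ∑ S ∈ ((Theta n).erase θ).image (relabelSet θ), X ^ #S := by
        rw [sum_image hinj]
        simp only [card_relabelSet]
    _ ≤ ∑ S ∈ univ.erase ∅, X ^ #S :=
        sum_le_sum_of_subset_of_nonneg hnonempty fun _ _ _ => by positivity
    _ = (1 + X) ^ n - 1 := by
        rw [sum_erase_eq_sub (mem_univ _), sum_pow_card_finset, Fintype.card_fin]
        simp

end Relabeling

lemma exp_sub_one_le_mul_exp (y : ℝ) : exp y - 1 ≤ y * exp y := by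
  have h : exp y * exp (-y) = 1 := by rw [← exp_add, add_neg_cancel, exp_zero]
  nlinarith [mul_le_mul_of_nonneg_left (one_sub_le_exp_neg y) (exp_pos y).le]

lemma one_add_pow_sub_one_le {x : ℝ} (hx : 0 ≤ x) (n : ℕ) :
    (1 + x) ^ n - 1 ≤ n * x * exp (n * x) := by
  have hpow : (1 + x) ^ n ≤ exp (n * x) := by
    rw [exp_nat_mul]
    gcongr
    linarith [add_one_le_exp x]
  linarith [exp_sub_one_le_mul_exp (n * x)]

lemma expPostMass_unifPrior (n : ℕ) (p q : ℝ) (θ : Fin n → Bool) :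
    expPostMass p q (unifPrior n) θ {θ}
      = ∑ x, graphPMF p q θ x * (graphPMF p q θ x / ∑ η ∈ Theta n, graphPMF p q η x) := by
  simp only [expPostMass, postMass, unifPrior, sum_singleton, ← mul_sum]
  congr! 2 with x
  exact mul_div_mul_left _ _ (by positivity)

/-- `P_θ Π({θ} | X^n) ≥ 1 − (n/2) ρ(p,q)^{n/2} exp(n ρ(p,q)^{n/2})`
for the uniform prior. -/
theorem stmt6 (n : ℕ) (hn : 2 ≤ n) (p q : ℝ) (hp : p ∈ Set.Ioo (0:ℝ) 1)
    (hq : q ∈ Set.Ioo (0:ℝ) 1) (θ : Fin n → Bool) (hθ : θ ∈ Theta n) :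
    1 - ((n : ℝ) / 2) * rho p q ^ ((n : ℝ) / 2)
        * Real.exp ((n : ℝ) * rho p q ^ ((n : ℝ) / 2))
      ≤ expPostMass p q (unifPrior n) θ {θ} := by
  set X := rho p q ^ ((n : ℝ) / 2)
  have hX : 0 ≤ X := rpow_nonneg (rho_pos hp.1 hq.1).le _
  have hPpos (η : Fin n → Bool) (x : ObsGraph n) : 0 < graphPMF p q η x :=
    productBernoulli_pos (edgeProb_mem hp hq η) x
  calc 1 - (n / 2) * X * exp (n * X)
      ≤ 1 - (∑ η ∈ (Theta n).erase θ, X ^ kdist η θ) / 2 := by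
        linarith [sum_pow_kdist_le (by omega) hθ hX, one_add_pow_sub_one_le hX n]
    _ ≤ 1 - ∑ η ∈ (Theta n).erase θ, (∑ x, √(graphPMF p q θ x * graphPMF p q η x)) / 2 := by
        rw [sum_div]
        gcongr with η
        exact sum_sqrt_graphPMF_le hp hq θ η
    _ ≤ _ := one_sub_sum_affinity_le_sum_mul_posterior hθ (fun η _ => hPpos η)
        (sum_productBernoulli _)
    _ = _ := (expPostMass_unifPrior n p q θ).symm
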